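/- Let X = {x₁,...,x_{n+2}} be a tight Grassmannian frame for R^n at angle α such that some subset of n+1 vectors, say {x₁,...,x_{n+1}}, is equiangular at angle α. Then |⟨xⱼ, x_{n+2}⟩| takes the same value β for all j ∈ [n+1], and the tight frame conditions 1 + nα² + β² = (n+2)/n and 1 + (n+1)β² = (n+2)/n force α = β. -/

import Mathlib

open scoped RealInnerProductSpace
abbrev E (n : ℕ) := EuclideanSpace ℝ (Fin n)
noncomputable def cohF {n m : ℕ} (x : Fin m → E n) : ℝ :=
  sSup {r : ℝ | ∃ i j : Fin m, i ≠ j ∧ r = |⟪x i, x j⟫|}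

/-!
Testing the frame identity `∑ᵢ ⟪xᵢ, v⟫² = ((n + 2) / n) ‖v‖²` on the frame vectors themselves:
for `j ≤ n + 1` the sum is `1 + n α² + ⟪xⱼ, x_{n+2}⟫²`, so all `|⟪xⱼ, x_{n+2}⟫|` equal a common
`β`; for `j = n + 2` it is `1 + (n + 1) β²`. Eliminating `(n + 2) / n` between the two relations
gives `n α² = n β²`.
-/

section TightFrame

variable {ι F : Type*} [Fintype ι] [NormedAddCommGroup F] [InnerProductSpace ℝ F]

theorem sum_inner_sq_eq_of_tight {x : ι → F} {A : ℝ} (htight : ∀ v, ∑ i, ⟪x i, v⟫ • x i = A • v)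
    (v : F) : ∑ i, ⟪x i, v⟫ ^ 2 = A * ‖v‖ ^ 2 := by
  have h := congrArg (⟪·, v⟫) (htight v)
  simpa only [sum_inner, real_inner_smul_left, real_inner_self_eq_norm_sq, ← sq] using h

theorem sum_inner_sq_eq_of_tight_of_norm_eq_one {x : ι → F} {A : ℝ}
    (htight : ∀ v, ∑ i, ⟪x i, v⟫ • x i = A • v) (hunit : ∀ i, ‖x i‖ = 1) (j : ι) :
    ∑ i, ⟪x i, x j⟫ ^ 2 = A := by
  rw [sum_inner_sq_eq_of_tight htight, hunit, one_pow, mul_one]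

end TightFrame

theorem sum_inner_sq_of_equiangular {F : Type*} [NormedAddCommGroup F] [InnerProductSpace ℝ F]
    {m : ℕ} {y : Fin (m + 1) → F} (hunit : ∀ i, ‖y i‖ = 1) {α : ℝ}
    (hequi : ∀ i j, i ≠ j → |⟪y i, y j⟫| = α) (k : Fin (m + 1)) :
    ∑ i, ⟪y i, y k⟫ ^ 2 = 1 + m * α ^ 2 := by
  have hoff : ∀ i ∈ ({k}ᶜ : Finset _), ⟪y i, y k⟫ ^ 2 = α ^ 2 := fun i hi => by
    rw [← sq_abs, hequi i k (Finset.notMem_singleton.mp (Finset.mem_compl.mp hi))]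
  rw [Fintype.sum_eq_add_sum_compl k, Finset.sum_congr rfl hoff, real_inner_self_eq_norm_sq, hunit]
  simp [Finset.card_compl]

theorem sq_eq_of_tight_frame_relations {n : ℕ} (hn : 0 < n) {a b : ℝ}
    (hrow : 1 + n * a + b = ((n : ℝ) + 2) / n) (hlast : 1 + ((n : ℝ) + 1) * b = ((n : ℝ) + 2) / n) :
    a = b := by
  have h : (n : ℝ) * a = n * b := by linarith
  exact mul_left_cancel₀ (Nat.cast_ne_zero.mpr hn.ne') h

theorem tight_equiangular_subset_forces_general {n : ℕ} (hn : 0 < n)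
    (x : Fin (n + 2) → E n) (hunit : ∀ i, ‖x i‖ = 1)
    (htight : ∀ v : E n, ∑ i, ⟪x i, v⟫ • x i = (((n : ℝ) + 2) / n) • v)
    (α : ℝ)
    (hequi : ∀ i j : Fin (n + 2), i ≠ j → i ≠ Fin.last (n + 1) → j ≠ Fin.last (n + 1) →
      |⟪x i, x j⟫| = α) :
    ∃ β : ℝ, (∀ j : Fin (n + 2), j ≠ Fin.last (n + 1) → |⟪x j, x (Fin.last (n + 1))⟫| = β) ∧
      1 + n * α ^ 2 + β ^ 2 = ((n : ℝ) + 2) / n ∧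
      1 + ((n : ℝ) + 1) * β ^ 2 = ((n : ℝ) + 2) / n ∧
      α = β := by
  set A : ℝ := ((n : ℝ) + 2) / n
  set z := x (Fin.last (n + 1))
  have hframe := sum_inner_sq_eq_of_tight_of_norm_eq_one htight hunit
  have hsub : ∀ k l : Fin (n + 1), k ≠ l → |⟪x k.castSucc, x l.castSucc⟫| = α := fun k l hkl =>
    hequi _ _ (Fin.castSucc_injective _ |>.ne hkl) (Fin.castSucc_ne_last k) (Fin.castSucc_ne_last l)
  have hrow (k : Fin (n + 1)) : 1 + n * α ^ 2 + ⟪x k.castSucc, z⟫ ^ 2 = A := by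
    have h := hframe k.castSucc
    rw [Fin.sum_univ_castSucc, sum_inner_sq_of_equiangular (fun i => hunit _) hsub k,
      real_inner_comm] at h
    exact h
  set β₂ := A - 1 - n * α ^ 2
  have hlast : 1 + ((n : ℝ) + 1) * β₂ = A := by
    have h := hframe (Fin.last (n + 1))
    rw [Fin.sum_univ_castSucc, Finset.sum_congr rfl fun k _ => (by linarith [hrow k] : _ = β₂),
      real_inner_self_eq_norm_sq, hunit] at h
    simp only [Finset.sum_const, Finset.card_univ, Fintype.card_fin, nsmul_eq_mul] at h
    push_cast at h
    linarith
  have hαβ : α ^ 2 = β₂ := sq_eq_of_tight_frame_relations hn (by linarith) hlast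
  have hα₀ : 0 ≤ α := hsub 0 (Fin.last n) (Fin.ext_iff.not.mpr hn.ne) ▸ abs_nonneg _
  refine ⟨α, fun j hj => ?_, by linarith, hαβ ▸ hlast, rfl⟩
  obtain ⟨k, rfl⟩ := Fin.exists_castSucc_eq.mpr hj
  rw [← abs_of_nonneg hα₀, ← sq_eq_sq_iff_abs_eq_abs]
  linarith [hrow k]

theorem tight_equiangular_subset_forces {n : ℕ} (hn : 0 < n)
    (x : Fin (n + 2) → E n) (hunit : ∀ i, ‖x i‖ = 1)
    (htight : ∀ v : E n, ∑ i, ⟪x i, v⟫ • x i = (((n : ℝ) + 2) / n) • v)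
    (α : ℝ) (hα : cohF x = α)
    (hequi : ∀ i j : Fin (n + 2), i ≠ j → i ≠ Fin.last (n + 1) → j ≠ Fin.last (n + 1) →
      |⟪x i, x j⟫| = α) :
    ∃ β : ℝ, (∀ j : Fin (n + 2), j ≠ Fin.last (n + 1) → |⟪x j, x (Fin.last (n + 1))⟫| = β) ∧
      1 + n * α ^ 2 + β ^ 2 = ((n : ℝ) + 2) / n ∧
      1 + ((n : ℝ) + 1) * β ^ 2 = ((n : ℝ) + 2) / n ∧
      α = β :=
  tight_equiangular_subset_forces_general hn x hunit htight α hequi
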